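/- Let R, Y, W, V be random variables on a probability space (Ω, ℱ, P) with R taking values in {0,1}, let π(V) be a σ(V)-measurable version of E[R | σ(V)], and suppose there is δ ∈ (0,1) with δ ≤ π(V) ≤ 1 − δ almost surely. Suppose (Y,W) is conditionally independent of R given σ(V). Let u, s be measurable functions with U := u(Y,V) and S := s(W,V) square-integrable, and let E[U | σ(V)], E[S | σ(V)] be σ(V)-measurable versions of their conditional expectations. Define D := (R/π(V))·(U − E[U | σ(V)]) − ((1−R)/(1−π(V)))·(S − E[S | σ(V)]). Then E[D] = 0 and E[D²] = E[ (1/π(V))·Var(U | σ(V)) + (1/(1 − π(V)))·Var(S | σ(V)) ], where Var(U | σ(V)) := E[(U − E[U | σ(V)])² | σ(V)] and Var(S | σ(V)) := E[(S − E[S | σ(V)])² | σ(V)]. -/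

import Mathlib

open MeasureTheory

/-- Conditional independence of `f` and `g` given the sub-σ-algebra `m`:
for all measurable sets `A`, `B`, a.s.
`P(f ∈ A, g ∈ B | m) = P(f ∈ A | m) · P(g ∈ B | m)`. -/
def CondIndepGiven {Ω α β : Type*} [MeasurableSpace Ω] [MeasurableSpace α] [MeasurableSpace β]
    (μ : Measure Ω) (m : MeasurableSpace Ω) (f : Ω → α) (g : Ω → β) : Prop :=
  ∀ (A : Set α) (B : Set β), MeasurableSet A → MeasurableSet B →
    μ[fun ω => A.indicator (fun _ => (1 : ℝ)) (f ω) * B.indicator (fun _ => (1 : ℝ)) (g ω) | m]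
      =ᵐ[μ]
    fun ω => (μ[fun ω' => A.indicator (fun _ => (1 : ℝ)) (f ω') | m]) ω *
             (μ[fun ω' => B.indicator (fun _ => (1 : ℝ)) (g ω') | m]) ω

/-!
Let `M = σ(Y, W) ⊔ σ(V)`. Conditional independence makes `π(V)` a version of `E[R | M]` too:
`R` and `E[R | σ(V)]` have the same integral over each `{(Y, W) ∈ A} ∩ {V ∈ B}`, and these sets
form a π-system generating `M`. As `U`, `S` and every `σ(V)`-measurable quantity are
`M`-measurable, the tower property gives `E[(R / π) X] = E[X]` and `E[((1 - R) / (1 - π)) X] = E[X]`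
for integrable `M`-measurable `X`. Since `R (1 - R) = 0`, `D²` has no cross term, so taking
`X = U - E[U | V]` and `X = (U - E[U | V])² / π` (and likewise for `S`) gives both moments; the
`σ(V)`-measurable weight `1 / π` is then pulled into the conditional variance.
-/

theorem norm_indicator_one_le {γ : Type*} (A : Set γ) (x : γ) :
    ‖A.indicator (fun _ => (1 : ℝ)) x‖ ≤ 1 :=
  (norm_indicator_le_norm_self _ x).trans_eq norm_one

theorem integrable_indicator_one_comp {Ω γ : Type*} [MeasurableSpace Ω] [MeasurableSpace γ]
    {μ : Measure Ω} [IsFiniteMeasure μ] {h : Ω → γ} {A : Set γ} (hh : Measurable h)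
    (hA : MeasurableSet A) : Integrable (fun ω => A.indicator (fun _ => (1 : ℝ)) (h ω)) μ :=
  .of_bound ((measurable_const.indicator hA).comp hh).aestronglyMeasurable 1
    (ae_of_all _ fun ω => norm_indicator_one_le A (h ω))

section PiSystem
variable {α : Type*}

theorem isPiSystem_image2_inter (m₁ m₂ : MeasurableSpace α) :
    IsPiSystem (Set.image2 (· ∩ ·) {s | MeasurableSet[m₁] s} {t | MeasurableSet[m₂] t}) := by
  rintro _ ⟨s₁, hs₁, t₁, ht₁, rfl⟩ _ ⟨s₂, hs₂, t₂, ht₂, rfl⟩ -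
  exact ⟨s₁ ∩ s₂, hs₁.inter hs₂, t₁ ∩ t₂, ht₁.inter ht₂, Set.inter_inter_inter_comm _ _ _ _⟩

theorem generateFrom_image2_inter (m₁ m₂ : MeasurableSpace α) :
    MeasurableSpace.generateFrom
      (Set.image2 (· ∩ ·) {s | MeasurableSet[m₁] s} {t | MeasurableSet[m₂] t}) = m₁ ⊔ m₂ := by
  refine le_antisymm (MeasurableSpace.generateFrom_le ?_) (sup_le ?_ ?_)
  · rintro _ ⟨s, hs, t, ht, rfl⟩
    exact (le_sup_left (b := m₂) s hs).inter (le_sup_right (a := m₁) t ht)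
  · exact fun s hs => MeasurableSpace.measurableSet_generateFrom
      ⟨s, hs, Set.univ, MeasurableSet.univ, Set.inter_univ s⟩
  · exact fun t ht => MeasurableSpace.measurableSet_generateFrom
      ⟨Set.univ, MeasurableSet.univ, t, ht, Set.univ_inter t⟩

end PiSystem

theorem setIntegral_eq_of_isPiSystem {α E : Type*} [NormedAddCommGroup E] [NormedSpace ℝ E]
    {m m₀ : MeasurableSpace α} {μ : Measure α} (hm : m ≤ m₀) {S : Set (Set α)}
    (h_eq : m = MeasurableSpace.generateFrom S) (h_inter : IsPiSystem S) {f g : α → E}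
    (hf : Integrable f μ) (hg : Integrable g μ)
    (basic : ∀ t ∈ S, ∫ x in t, f x ∂μ = ∫ x in t, g x ∂μ)
    (h_univ : ∫ x, f x ∂μ = ∫ x, g x ∂μ) :
    ∀ t, MeasurableSet[m] t → ∫ x in t, f x ∂μ = ∫ x in t, g x ∂μ := by
  refine MeasurableSpace.induction_on_inter h_eq h_inter (by simp) basic ?_ ?_
  · intro t ht h
    rw [setIntegral_compl (hm t ht) hf, setIntegral_compl (hm t ht) hg, h, h_univ]
  · intro t htd htm h
    rw [integral_iUnion (fun i => hm _ (htm i)) htd hf.integrableOn,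
      integral_iUnion (fun i => hm _ (htm i)) htd hg.integrableOn]
    exact tsum_congr h

theorem integral_mul_condExp_of_stronglyMeasurable {Ω : Type*} {m mΩ : MeasurableSpace Ω}
    {μ : Measure Ω} (hm : m ≤ mΩ) [SigmaFinite (μ.trim hm)] {f g : Ω → ℝ}
    (hf : StronglyMeasurable[m] f) (hfg : Integrable (fun ω => f ω * g ω) μ)
    (hg : Integrable g μ) :
    ∫ ω, f ω * μ[g|m] ω ∂μ = ∫ ω, f ω * g ω ∂μ := by
  rw [← integral_condExp hm (f := fun ω => f ω * g ω)]
  exact integral_congr_ae (condExp_mul_of_stronglyMeasurable_left hf hfg hg).symm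

theorem condExp_indicator_sup_ae_eq_of_condIndepGiven {Ω α β : Type*} {m : MeasurableSpace Ω}
    [mΩ : MeasurableSpace Ω] [MeasurableSpace α] [MeasurableSpace β] {μ : Measure Ω}
    [IsFiniteMeasure μ] (hm : m ≤ mΩ) {f : Ω → α} {g : Ω → β} (hf : Measurable f)
    (hg : Measurable g) {B : Set β} (hB : MeasurableSet B) (hCI : CondIndepGiven μ m f g) :
    μ[fun ω => B.indicator (fun _ => (1 : ℝ)) (g ω) | MeasurableSpace.comap f inferInstance ⊔ m]
      =ᵐ[μ] μ[fun ω => B.indicator (fun _ => (1 : ℝ)) (g ω) | m] := by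
  set G : Ω → ℝ := fun ω => B.indicator (fun _ => (1 : ℝ)) (g ω)
  have hG : Integrable G μ := integrable_indicator_one_comp hg hB
  have hM : MeasurableSpace.comap f inferInstance ⊔ m ≤ mΩ := sup_le hf.comap_le hm
  have basic : ∀ s ∈ Set.image2 (· ∩ ·)
      {s | MeasurableSet[MeasurableSpace.comap f inferInstance] s} {t | MeasurableSet[m] t},
      ∫ ω in s, μ[G|m] ω ∂μ = ∫ ω in s, G ω ∂μ := by
    rintro _ ⟨_, ⟨A, hA, rfl⟩, t, ht, rfl⟩
    set F : Ω → ℝ := fun ω => A.indicator (fun _ => (1 : ℝ)) (f ω)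
    have hF : Integrable F μ := integrable_indicator_one_comp hf hA
    have hF_le : ∀ᵐ ω ∂μ, ‖F ω‖ ≤ 1 := ae_of_all _ fun ω => norm_indicator_one_le A (f ω)
    have hF_condExp : Integrable (fun ω => F ω * μ[G|m] ω) μ :=
      integrable_condExp.bdd_mul hF.aestronglyMeasurable hF_le
    have restrict_eq : ∀ h : Ω → ℝ, ∫ ω in f ⁻¹' A ∩ t, h ω ∂μ = ∫ ω in t, F ω * h ω ∂μ := by
      intro h
      rw [Set.inter_comm, ← setIntegral_indicator (hf hA)]
      refine setIntegral_congr_fun (hm t ht) fun ω _ => ?_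
      by_cases hω : f ω ∈ A <;> simp [F, hω]
    calc ∫ ω in f ⁻¹' A ∩ t, μ[G|m] ω ∂μ = ∫ ω in t, F ω * μ[G|m] ω ∂μ := restrict_eq _
      _ = ∫ ω in t, μ[fun ω => F ω * μ[G|m] ω | m] ω ∂μ :=
        (setIntegral_condExp hm hF_condExp ht).symm
      _ = ∫ ω in t, μ[F|m] ω * μ[G|m] ω ∂μ := setIntegral_congr_ae (hm t ht) <| by
        filter_upwards [condExp_mul_of_stronglyMeasurable_right stronglyMeasurable_condExp
          hF_condExp hF] with ω h _ using h
      _ = ∫ ω in t, μ[fun ω => F ω * G ω | m] ω ∂μ := setIntegral_congr_ae (hm t ht) <| by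
        filter_upwards [hCI A B hA hB] with ω h _ using h.symm
      _ = ∫ ω in t, F ω * G ω ∂μ :=
        setIntegral_condExp hm (hG.bdd_mul hF.aestronglyMeasurable hF_le) ht
      _ = ∫ ω in f ⁻¹' A ∩ t, G ω ∂μ := (restrict_eq _).symm
  have hmM : m ≤ MeasurableSpace.comap f inferInstance ⊔ m := le_sup_right
  refine (ae_eq_condExp_of_forall_setIntegral_eq hM hG
    (fun s _ _ => integrable_condExp.integrableOn)
    (fun s hs _ => setIntegral_eq_of_isPiSystem hM (generateFrom_image2_inter _ _).symm
      (isPiSystem_image2_inter _ _) integrable_condExp hG basic (integral_condExp hm) s hs)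
    (stronglyMeasurable_condExp.mono hmM).aestronglyMeasurable).symm

theorem condExp_sup_ae_eq_of_condIndepGiven {Ω α : Type*} {m : MeasurableSpace Ω}
    [mΩ : MeasurableSpace Ω] [MeasurableSpace α] {μ : Measure Ω} [IsFiniteMeasure μ]
    (hm : m ≤ mΩ) {f : Ω → α} {R : Ω → ℝ} (hf : Measurable f) (hR : Measurable R)
    (hR01 : ∀ ω, R ω = 0 ∨ R ω = 1) (hCI : CondIndepGiven μ m f R) :
    μ[R | MeasurableSpace.comap f inferInstance ⊔ m] =ᵐ[μ] μ[R | m] := by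
  have hR_eq : (fun ω => ({1} : Set ℝ).indicator (fun _ => (1 : ℝ)) (R ω)) = R :=
    funext fun ω => by rcases hR01 ω with h | h <;> simp [h]
  simpa only [hR_eq] using
    condExp_indicator_sup_ae_eq_of_condIndepGiven hm hf hR (measurableSet_singleton 1) hCI

section InverseProbabilityWeighting
variable {Ω : Type*} {M : MeasurableSpace Ω} [mΩ : MeasurableSpace Ω] {μ : Measure Ω}
  {T q X : Ω → ℝ} {δ : ℝ}

theorem integrable_div_mul_of_le (hδ : 0 < δ) (hT : ∀ ω, |T ω| ≤ 1)
    (hTm : AEStronglyMeasurable T μ) (hqm : AEStronglyMeasurable q μ)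
    (hq : ∀ᵐ ω ∂μ, δ ≤ q ω) (hX : Integrable X μ) :
    Integrable (fun ω => T ω / q ω * X ω) μ := by
  refine hX.bdd_mul (c := δ⁻¹) (hTm.aemeasurable.div hqm.aemeasurable).aestronglyMeasurable ?_
  filter_upwards [hq] with ω hω
  have hq0 : 0 < q ω := hδ.trans_le hω
  calc ‖T ω / q ω‖ = |T ω| / q ω := by rw [Real.norm_eq_abs, abs_div, abs_of_pos hq0]
    _ ≤ 1 / q ω := by gcongr; exact hT ω
    _ ≤ 1 / δ := by gcongr
    _ = δ⁻¹ := one_div δ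

theorem integral_div_mul_of_ae_eq_condExp (hM : M ≤ mΩ) [SigmaFinite (μ.trim hM)]
    (hq : q =ᵐ[μ] μ[T|M]) (hqM : Measurable[M] q) (hq0 : ∀ᵐ ω ∂μ, q ω ≠ 0)
    (hXM : Measurable[M] X) (hT : Integrable T μ)
    (hTX : Integrable (fun ω => T ω / q ω * X ω) μ) :
    ∫ ω, T ω / q ω * X ω ∂μ = ∫ ω, X ω ∂μ := by
  have hTX' : Integrable (fun ω => X ω / q ω * T ω) μ :=
    hTX.congr (ae_of_all _ fun ω => by ring)
  calc ∫ ω, T ω / q ω * X ω ∂μ = ∫ ω, X ω / q ω * T ω ∂μ :=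
        integral_congr_ae (ae_of_all _ fun ω => by ring)
    _ = ∫ ω, X ω / q ω * μ[T|M] ω ∂μ :=
        (integral_mul_condExp_of_stronglyMeasurable hM (hXM.div hqM).stronglyMeasurable
          hTX' hT).symm
    _ = ∫ ω, X ω ∂μ := integral_congr_ae <| by
        filter_upwards [hq, hq0] with ω h h0
        rw [← h, div_mul_cancel₀ _ h0]

end InverseProbabilityWeighting

theorem sq_weighted_sub_of_eq_zero_or_eq_one {r p x y : ℝ} (hr : r = 0 ∨ r = 1) :
    (r / p * x - (1 - r) / (1 - p) * y) ^ 2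
      = r / p * (1 / p * x ^ 2) + (1 - r) / (1 - p) * (1 / (1 - p) * y ^ 2) := by
  rcases hr with rfl | rfl <;> ring

structure IsPropensity {Ω : Type*} {mΩ : MeasurableSpace Ω} (μ : Measure[mΩ] Ω)
    (m M : MeasurableSpace Ω) (T q : Ω → ℝ) (δ : ℝ) : Prop where
  le_outer : m ≤ M
  outer_le : M ≤ mΩ
  pos : 0 < δ
  selection_mem_Icc : ∀ ω, T ω ∈ Set.Icc 0 1
  aestronglyMeasurable_selection : AEStronglyMeasurable[mΩ] T μ
  measurable : Measurable[m] q
  ae_eq_condExp : q =ᵐ[μ] μ[T|M]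
  ae_le : ∀ᵐ ω ∂μ, δ ≤ q ω

/-- `T / q * (X - e)` is one inverse-probability-weighted arm of the influence function. -/
structure IPWArm {Ω : Type*} {mΩ : MeasurableSpace Ω} (μ : Measure[mΩ] Ω) (m M : MeasurableSpace Ω)
    (T q X e : Ω → ℝ) (δ : ℝ) : Prop extends IsPropensity μ m M T q δ where
  measurable_outcome : Measurable[M] X
  memLp_outcome : MemLp X 2 μ
  measurable_mean : Measurable[m] e
  mean_ae_eq : e =ᵐ[μ] μ[X|m]

namespace IsPropensity
variable {Ω : Type*} {m M : MeasurableSpace Ω} [mΩ : MeasurableSpace Ω] {μ : Measure Ω}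
  {T q : Ω → ℝ} {δ : ℝ}

theorem le_ambient (h : IsPropensity μ m M T q δ) : m ≤ mΩ := h.le_outer.trans h.outer_le

theorem aestronglyMeasurable (h : IsPropensity μ m M T q δ) : AEStronglyMeasurable q μ :=
  (h.measurable.mono h.le_ambient le_rfl).aestronglyMeasurable

theorem abs_selection_le_one (h : IsPropensity μ m M T q δ) (ω : Ω) : |T ω| ≤ 1 :=
  abs_le.2 ⟨by linarith [(h.selection_mem_Icc ω).1], (h.selection_mem_Icc ω).2⟩

theorem integrable_selection [IsFiniteMeasure μ] (h : IsPropensity μ m M T q δ) :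
    Integrable T μ :=
  .of_bound h.aestronglyMeasurable_selection 1 (ae_of_all _ h.abs_selection_le_one)

theorem one_sub [IsFiniteMeasure μ] (h : IsPropensity μ m M T q δ)
    (hq : ∀ᵐ ω ∂μ, q ω ≤ 1 - δ) :
    IsPropensity μ m M (fun ω => 1 - T ω) (fun ω => 1 - q ω) δ where
  le_outer := h.le_outer
  outer_le := h.outer_le
  pos := h.pos
  selection_mem_Icc ω := by
    obtain ⟨h0, h1⟩ := h.selection_mem_Icc ω
    constructor <;> linarith
  aestronglyMeasurable_selection := aestronglyMeasurable_const.sub h.aestronglyMeasurable_selection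
  measurable := measurable_const.sub h.measurable
  ae_eq_condExp := by
    filter_upwards [h.ae_eq_condExp,
      condExp_sub (integrable_const (1 : ℝ)) h.integrable_selection M] with ω hω hsub
    simp only [Pi.sub_apply, condExp_const h.outer_le] at hsub
    rw [hω, ← hsub]
    rfl
  ae_le := hq.mono fun ω hω => by linarith

theorem integrable_div_mul (h : IsPropensity μ m M T q δ) {Z : Ω → ℝ} (hZ : Integrable Z μ) :
    Integrable (fun ω => T ω / q ω * Z ω) μ :=
  integrable_div_mul_of_le h.pos h.abs_selection_le_one h.aestronglyMeasurable_selection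
    h.aestronglyMeasurable h.ae_le hZ

theorem integrable_inv_mul (h : IsPropensity μ m M T q δ) {Z : Ω → ℝ} (hZ : Integrable Z μ) :
    Integrable (fun ω => 1 / q ω * Z ω) μ :=
  integrable_div_mul_of_le h.pos (fun _ => by simp) aestronglyMeasurable_const
    h.aestronglyMeasurable h.ae_le hZ

theorem integral_div_mul [IsFiniteMeasure μ] (h : IsPropensity μ m M T q δ) {Z : Ω → ℝ}
    (hZM : Measurable[M] Z) (hZ : Integrable Z μ) :
    ∫ ω, T ω / q ω * Z ω ∂μ = ∫ ω, Z ω ∂μ := by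
  refine integral_div_mul_of_ae_eq_condExp h.outer_le h.ae_eq_condExp
    (h.measurable.mono h.le_outer le_rfl) ?_ hZM h.integrable_selection (h.integrable_div_mul hZ)
  filter_upwards [h.ae_le] with ω hω using (h.pos.trans_le hω).ne'

end IsPropensity

namespace IPWArm
variable {Ω : Type*} {m M : MeasurableSpace Ω} [mΩ : MeasurableSpace Ω] {μ : Measure Ω}
  {T q X e : Ω → ℝ} {δ : ℝ}

theorem measurable_residual (h : IPWArm μ m M T q X e δ) :
    Measurable[M] (fun ω => X ω - e ω) :=
  h.measurable_outcome.sub (h.measurable_mean.mono h.le_outer le_rfl)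

theorem memLp_residual (h : IPWArm μ m M T q X e δ) :
    MemLp (fun ω => X ω - e ω) 2 μ :=
  h.memLp_outcome.sub ((h.memLp_outcome.condExp one_le_two).ae_eq h.mean_ae_eq.symm)

theorem integrable_centered [IsFiniteMeasure μ] (h : IPWArm μ m M T q X e δ) :
    Integrable (fun ω => T ω / q ω * (X ω - e ω)) μ :=
  h.integrable_div_mul (h.memLp_residual.integrable one_le_two)

theorem integral_centered [IsFiniteMeasure μ] (h : IPWArm μ m M T q X e δ) :
    ∫ ω, T ω / q ω * (X ω - e ω) ∂μ = 0 := by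
  have hX : Integrable X μ := h.memLp_outcome.integrable one_le_two
  rw [h.integral_div_mul h.measurable_residual (h.memLp_residual.integrable one_le_two),
    integral_sub hX (integrable_condExp.congr h.mean_ae_eq.symm), integral_congr_ae h.mean_ae_eq,
    integral_condExp h.le_ambient, sub_self]

theorem integrable_sq [IsFiniteMeasure μ] (h : IPWArm μ m M T q X e δ) :
    Integrable (fun ω => T ω / q ω * (1 / q ω * (X ω - e ω) ^ 2)) μ :=
  h.integrable_div_mul (h.integrable_inv_mul h.memLp_residual.integrable_sq)

theorem integral_sq [IsFiniteMeasure μ] (h : IPWArm μ m M T q X e δ) :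
    ∫ ω, T ω / q ω * (1 / q ω * (X ω - e ω) ^ 2) ∂μ
      = ∫ ω, 1 / q ω * μ[fun ω' => (X ω' - e ω') ^ 2 | m] ω ∂μ := by
  have hres := h.memLp_residual.integrable_sq
  rw [h.integral_div_mul ?_ (h.integrable_inv_mul hres),
    integral_mul_condExp_of_stronglyMeasurable (f := fun ω => 1 / q ω) h.le_ambient
      (measurable_const.div h.measurable).stronglyMeasurable (h.integrable_inv_mul hres) hres]
  exact (measurable_const.div (h.measurable.mono h.le_outer le_rfl)).mul
    (h.measurable_residual.pow_const 2)

theorem integrable_inv_mul_condVar (h : IPWArm μ m M T q X e δ) :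
    Integrable (fun ω => 1 / q ω * μ[fun ω' => (X ω' - e ω') ^ 2 | m] ω) μ :=
  h.integrable_inv_mul integrable_condExp

end IPWArm

/-- The efficient influence term
`D = (R/π(V))·(U - E[U|σ(V)]) - ((1-R)/(1-π(V)))·(S - E[S|σ(V)])` has mean zero and
second moment `E[(1/π(V))·Var(U|σ(V)) + (1/(1-π(V)))·Var(S|σ(V))]`, the quantity `Ω`
in the paper's semiparametric efficiency bound (Proposition 2). -/
theorem stmt_17 {Ω : Type*} [MeasurableSpace Ω] (μ : Measure Ω) [IsProbabilityMeasure μ]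
    (R Y W V : Ω → ℝ) (hR : Measurable R) (hY : Measurable Y)
    (hW : Measurable W) (hV : Measurable V)
    (hR01 : ∀ ω, R ω = 0 ∨ R ω = 1)
    (πV : Ω → ℝ)
    (hπmeas : Measurable[MeasurableSpace.comap V inferInstance] πV)
    (hπver : πV =ᵐ[μ] μ[R | MeasurableSpace.comap V inferInstance])
    (δ : ℝ) (hδ : δ ∈ Set.Ioo (0 : ℝ) 1)
    (hπbound : ∀ᵐ ω ∂μ, δ ≤ πV ω ∧ πV ω ≤ 1 - δ)
    (hCI : CondIndepGiven μ (MeasurableSpace.comap V inferInstance)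
      (fun ω => (Y ω, W ω)) R)
    (u s : ℝ × ℝ → ℝ) (hu : Measurable u) (hs : Measurable s)
    (hU2 : MemLp (fun ω => u (Y ω, V ω)) 2 μ)
    (hS2 : MemLp (fun ω => s (W ω, V ω)) 2 μ)
    (eU : Ω → ℝ)
    (heUmeas : Measurable[MeasurableSpace.comap V inferInstance] eU)
    (heUver : eU =ᵐ[μ]
      μ[fun ω => u (Y ω, V ω) | MeasurableSpace.comap V inferInstance])
    (eS : Ω → ℝ)
    (heSmeas : Measurable[MeasurableSpace.comap V inferInstance] eS)
    (heSver : eS =ᵐ[μ]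
      μ[fun ω => s (W ω, V ω) | MeasurableSpace.comap V inferInstance])
    (D : Ω → ℝ)
    (hD : D = fun ω => (R ω / πV ω) * (u (Y ω, V ω) - eU ω)
      - ((1 - R ω) / (1 - πV ω)) * (s (W ω, V ω) - eS ω)) :
    (∫ ω, D ω ∂μ = 0) ∧
    ∫ ω, D ω ^ 2 ∂μ
      = ∫ ω, ((1 / πV ω) *
          (μ[fun ω' => (u (Y ω', V ω') - eU ω') ^ 2
              | MeasurableSpace.comap V inferInstance]) ω
        + (1 / (1 - πV ω)) *
          (μ[fun ω' => (s (W ω', V ω') - eS ω') ^ 2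
              | MeasurableSpace.comap V inferInstance]) ω) ∂μ := by
  have hYW : Measurable fun ω => (Y ω, W ω) := hY.prodMk hW
  have hπ : IsPropensity μ _ (MeasurableSpace.comap (fun ω => (Y ω, W ω)) inferInstance
      ⊔ MeasurableSpace.comap V inferInstance) R πV δ :=
    { le_outer := le_sup_right
      outer_le := sup_le hYW.comap_le hV.comap_le
      pos := hδ.1
      selection_mem_Icc := fun ω => by rcases hR01 ω with h | h <;> simp [h]
      aestronglyMeasurable_selection := hR.aestronglyMeasurable
      measurable := hπmeas
      ae_eq_condExp :=
        hπver.trans (condExp_sup_ae_eq_of_condIndepGiven hV.comap_le hYW hR hR01 hCI).symm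
      ae_le := hπbound.mono fun _ h => h.1 }
  have hYM := (comap_measurable (m := inferInstance) fun ω => (Y ω, W ω)).mono
    (le_sup_left (b := MeasurableSpace.comap V inferInstance)) le_rfl
  have hVM := (comap_measurable (m := inferInstance) V).mono
    (le_sup_right (a := MeasurableSpace.comap (fun ω => (Y ω, W ω)) inferInstance)) le_rfl
  have armU : IPWArm μ _ _ R πV (fun ω => u (Y ω, V ω)) eU δ :=
    ⟨hπ, hu.comp ((measurable_fst.comp hYM).prodMk hVM), hU2, heUmeas, heUver⟩
  have armS : IPWArm μ _ _ (fun ω => 1 - R ω) (fun ω => 1 - πV ω) (fun ω => s (W ω, V ω)) eS δ :=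
    ⟨hπ.one_sub (hπbound.mono fun _ h => h.2), hs.comp ((measurable_snd.comp hYM).prodMk hVM),
      hS2, heSmeas, heSver⟩
  have hD_sq : ∀ ω, D ω ^ 2 = R ω / πV ω * (1 / πV ω * (u (Y ω, V ω) - eU ω) ^ 2)
      + (1 - R ω) / (1 - πV ω) * (1 / (1 - πV ω) * (s (W ω, V ω) - eS ω) ^ 2) := fun ω => by
    rw [hD]; exact sq_weighted_sub_of_eq_zero_or_eq_one (hR01 ω)
  refine ⟨?_, ?_⟩
  · rw [hD, integral_sub armU.integrable_centered armS.integrable_centered,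
      armU.integral_centered, armS.integral_centered, sub_zero]
  · rw [funext hD_sq, integral_add armU.integrable_sq armS.integrable_sq, armU.integral_sq,
      armS.integral_sq,
      integral_add armU.integrable_inv_mul_condVar armS.integrable_inv_mul_condVar]
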